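/- If e^{2i(J+J')} = (sin η − sin λ)/sin(η+λ) and e^{2i(J−J')} = (sin η − sin λ)/sin(η−λ), then the two-site gate U = exp(−iJ(σˣ⊗σˣ + σʸ⊗σʸ) − iJ'(σᶻ⊗σᶻ − I)) equals the matrix Ř(λ) with rows (1,0,0,0), (0, sinη/sin(λ+η), sinλ/sin(λ+η), 0), (0, sinλ/sin(λ+η), sinη/sin(λ+η), 0), (0,0,0,1). -/

import Mathlib

/-!
The generator `H` of the gate vanishes on `|00⟩, |11⟩` and has eigenvalues `-2i(J - J')` on the
triplet `|01⟩ + |10⟩` and `2i(J + J')` on the singlet `|01⟩ - |10⟩`. So `H = a P₊ + b P₋` for the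
orthogonal rank-one projectors `P₊, P₋` onto these vectors, and the power series gives
`exp H = 1 + (eᵃ - 1) P₊ + (eᵇ - 1) P₋`. The matrix `Ř(λ)` has the same form with eigenvalues
`(sin η ± sin λ) / sin (λ + η)`; the hypotheses identify `eᵇ` with the singlet one directly and,
via `sin (η + λ) sin (η - λ) = sin² η - sin² λ`, `eᵃ` with the triplet one.
-/

open Matrix Complex Kronecker

def σx : Matrix (Fin 2) (Fin 2) ℂ := !![0, 1; 1, 0]
noncomputable def σy : Matrix (Fin 2) (Fin 2) ℂ := !![0, -Complex.I; Complex.I, 0]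
def σz : Matrix (Fin 2) (Fin 2) ℂ := !![1, 0; 0, -1]

/-- The braid-form `R`-matrix `Ř(λ)` on `ℂ² ⊗ ℂ²`. -/
noncomputable def Rbm (η lam : ℂ) : Matrix (Fin 2 × Fin 2) (Fin 2 × Fin 2) ℂ :=
  fun p q =>
    if p = q then
      (if p.1 = p.2 then 1 else Complex.sin η / Complex.sin (lam + η))
    else if p.1 = q.2 ∧ p.2 = q.1 then Complex.sin lam / Complex.sin (lam + η)
    else 0

open scoped Nat

namespace OrthogonalIdempotents

variable {ι R A : Type*} [Fintype ι] {e : ι → A}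

theorem sum_smul_pow_succ [CommSemiring R] [Semiring A] [Algebra R A]
    (he : OrthogonalIdempotents e) (c : ι → R) (n : ℕ) :
    (∑ i, c i • e i) ^ (n + 1) = ∑ i, c i ^ (n + 1) • e i := by
  induction n with
  | zero => simp
  | succ n ih =>
    rw [pow_succ, ih, Finset.sum_mul_sum]
    refine Finset.sum_congr rfl fun i _ => ?_
    rw [Finset.sum_eq_single i
        (fun j _ hji => by rw [smul_mul_smul_comm, he.ortho hji.symm, smul_zero]) (by simp),
      smul_mul_smul_comm, (he.idem i).eq, ← pow_succ]

theorem exp_sum_smul {𝕜 : Type*} [RCLike 𝕜] [Ring A] [Algebra 𝕜 A] [TopologicalSpace A]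
    [IsTopologicalRing A] [ContinuousSMul 𝕜 A] [T2Space A]
    (he : OrthogonalIdempotents e) (c : ι → 𝕜) :
    NormedSpace.exp (∑ i, c i • e i) = 1 + ∑ i, (NormedSpace.exp (c i) - 1) • e i := by
  have hscalar : HasSum (fun n => ∑ i, ((n !⁻¹ : 𝕜) • c i ^ n) • e i)
      (∑ i, NormedSpace.exp (c i) • e i) :=
    hasSum_sum fun i _ => (NormedSpace.exp_series_hasSum_exp' (c i)).smul_const (e i)
  have hterm : ∀ n, (n !⁻¹ : 𝕜) • (∑ i, c i • e i) ^ n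
      = ∑ i, ((n !⁻¹ : 𝕜) • c i ^ n) • e i + if n = 0 then 1 - ∑ i, e i else 0 := by
    rintro (_ | n)
    · simp
    · simp [he.sum_smul_pow_succ, Finset.smul_sum, smul_smul]
  have hseries := hscalar.add (hasSum_ite_eq 0 (1 - ∑ i, e i))
  simp_rw [← hterm] at hseries
  rw [congrFun (NormedSpace.exp_eq_tsum 𝕜) _, hseries.tsum_eq]
  simp only [sub_smul, one_smul, Finset.sum_sub_distrib]
  abel

end OrthogonalIdempotents

theorem Matrix.orthogonalIdempotents_vecMulVec {ι m R : Type*} [Fintype m] [DecidableEq m]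
    [CommSemiring R] {u v : ι → m → R} (hvu : ∀ i, v i ⬝ᵥ u i = 1)
    (hvu' : Pairwise fun i j => v i ⬝ᵥ u j = 0) :
    OrthogonalIdempotents fun i => vecMulVec (u i) (v i) where
  idem i := by rw [IsIdempotentElem, vecMulVec_mul_vecMulVec, hvu, one_smul]
  ortho i j hij := by
    dsimp only
    rw [vecMulVec_mul_vecMulVec, hvu' hij, zero_smul, vecMulVec_zero]

theorem Complex.sin_add_mul_sin_sub (x y : ℂ) :
    sin (x + y) * sin (x - y) = sin x ^ 2 - sin y ^ 2 := by
  rw [sin_add, sin_sub]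
  linear_combination sin x ^ 2 * sin_sq_add_cos_sq y - sin y ^ 2 * sin_sq_add_cos_sq x

def tripletSingletVec : Fin 2 → Fin 2 × Fin 2 → ℂ :=
  ![Pi.single (0, 1) 1 + Pi.single (1, 0) 1, Pi.single (0, 1) 1 - Pi.single (1, 0) 1]

noncomputable def tripletSingletProj (i : Fin 2) : Matrix (Fin 2 × Fin 2) (Fin 2 × Fin 2) ℂ :=
  vecMulVec (tripletSingletVec i) ((2 : ℂ)⁻¹ • tripletSingletVec i)

theorem orthogonalIdempotents_tripletSingletProj : OrthogonalIdempotents tripletSingletProj := by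
  refine Matrix.orthogonalIdempotents_vecMulVec (fun i => ?_) fun i j hij => ?_
  · fin_cases i <;> norm_num [tripletSingletVec, dotProduct, Fintype.sum_prod_type]
  · fin_cases i <;> fin_cases j <;> simp_all [tripletSingletVec, dotProduct, Fintype.sum_prod_type]

theorem gate_generator_eq_sum_smul_tripletSingletProj (J J' : ℂ) :
    (-I * J) • (σx ⊗ₖ σx + σy ⊗ₖ σy)
        + (-I * J') • (σz ⊗ₖ σz - (1 : Matrix (Fin 2 × Fin 2) (Fin 2 × Fin 2) ℂ))
      = ∑ i, ![-(2 * I * (J - J')), 2 * I * (J + J')] i • tripletSingletProj i := by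
  ext ⟨i, j⟩ ⟨k, l⟩
  fin_cases i <;> fin_cases j <;> fin_cases k <;> fin_cases l <;>
    simp [tripletSingletProj, tripletSingletVec, σx, σy, σz, one_apply, vecMulVec_apply] <;> ring

theorem Rbm_eq_one_add_sum_smul_tripletSingletProj (η lam : ℂ) :
    Rbm η lam = 1 + ∑ i, (![(sin η + sin lam) / sin (lam + η),
      (sin η - sin lam) / sin (lam + η)] i - 1) • tripletSingletProj i := by
  ext ⟨i, j⟩ ⟨k, l⟩
  fin_cases i <;> fin_cases j <;> fin_cases k <;> fin_cases l <;>
    simp [Rbm, tripletSingletProj, tripletSingletVec, one_apply, vecMulVec_apply] <;> ring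

theorem gate_eq_braid (J J' η lam : ℂ)
    (h1 : Complex.exp (2 * Complex.I * (J + J'))
        = (Complex.sin η - Complex.sin lam) / Complex.sin (η + lam))
    (h2 : Complex.exp (2 * Complex.I * (J - J'))
        = (Complex.sin η - Complex.sin lam) / Complex.sin (η - lam)) :
    NormedSpace.exp
      ((-Complex.I * J) • (σx ⊗ₖ σx + σy ⊗ₖ σy)
        + (-Complex.I * J') • (σz ⊗ₖ σz - (1 : Matrix (Fin 2 × Fin 2) (Fin 2 × Fin 2) ℂ)))
      = Rbm η lam := by
  obtain ⟨hdiff, hsum⟩ : sin η - sin lam ≠ 0 ∧ sin (η + lam) ≠ 0 :=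
    div_ne_zero_iff.mp (h1 ▸ Complex.exp_ne_zero _)
  have htriplet : Complex.exp (-(2 * I * (J - J'))) = (sin η + sin lam) / sin (lam + η) := by
    rw [Complex.exp_neg, h2, inv_div, div_eq_div_iff hdiff (add_comm η lam ▸ hsum), add_comm lam]
    linear_combination sin_add_mul_sin_sub η lam
  rw [gate_generator_eq_sum_smul_tripletSingletProj,
    orthogonalIdempotents_tripletSingletProj.exp_sum_smul,
    Rbm_eq_one_add_sum_smul_tripletSingletProj]
  congr! 4 with i
  fin_cases i <;> simp [← Complex.exp_eq_exp_ℂ, htriplet, h1, add_comm lam η]
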